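/- arXiv:2510.18359 — 4 statements merged into one kernel-verified Lean document; each statement's English description precedes it below -/
import Mathlib

section
/- Let G be a connected 4-regular simple graph and let H be a Hamiltonian cycle in the subdivided double D(G). Then H has no hairpin if and only if the cyclic sequence of edges of G obtained by reading off, in cyclic order along H, the subdivision vertices visited by H forms an Eulerian circuit of G (a closed walk in G traversing every edge of G exactly once). -/
/-!
On a Hamiltonian cycle of `D(G)` every subdivision vertex `e` lies between twins of the two
endpoints of `e`, unless it is a hairpin `(v,0) – e – (v,1)`. Without hairpins, the twin
vertices along the cycle therefore project to a closed walk of `G` through the visited edges in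
order, and it is an Eulerian circuit because the cycle visits each subdivision vertex exactly
once. Conversely, at a hairpin the vertex `v` lies on `e` and on the edges visited just before
and after `e`; in a closed trail those two edges meet `e` at different endpoints and differ
from `e`, so no vertex lies on all three.
-/

open SimpleGraph

/-- The subdivided double `D(G)` of a simple graph `G`: vertices are the twin vertices
`(v, i)` for `v : V`, `i : Bool`, together with the subdivision vertices (edges of `G`);
a twin vertex `(v, i)` is adjacent to a subdivision vertex `e` iff `v` is an endpoint of `e`. -/
def subdividedDouble {V : Type*} (G : SimpleGraph V) :
    SimpleGraph ((V × Bool) ⊕ ↥G.edgeSet) :=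
  SimpleGraph.fromRel fun x y =>
    ∃ (v : V) (i : Bool) (e : G.edgeSet),
      x = Sum.inl (v, i) ∧ y = Sum.inr e ∧ v ∈ (e : Sym2 V)

theorem List.IsRotated.filterMap {α β : Type*} (f : α → Option β) {l l' : List α}
    (h : l ~r l') : l.filterMap f ~r l'.filterMap f := by
  obtain ⟨n, rfl⟩ := h
  rcases l.eq_nil_or_concat' with rfl | ⟨l₀, a, rfl⟩
  · simp
  rw [← List.rotate_mod, List.rotate_eq_drop_append_take (Nat.mod_lt _ (by simp)).le]
  conv_lhs => rw [← List.take_append_drop (n % (l₀ ++ [a]).length) (l₀ ++ [a])]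
  rw [List.filterMap_append, List.filterMap_append]
  exact List.isRotated_append

namespace SimpleGraph.Walk

variable {V : Type*} {G : SimpleGraph V}

theorem exists_edges_eq_rotate {u : V} (c : G.Walk u u) (n : ℕ) :
    ∃ (w : V) (c' : G.Walk w w), c'.edges = c.edges.rotate n := by
  induction n with
  | zero => exact ⟨u, c, by simp⟩
  | succ n ih =>
    obtain ⟨w, c', hc'⟩ := ih
    rw [← List.rotate_rotate, ← hc']
    cases c' with
    | nil => exact ⟨w, nil, rfl⟩
    | cons h p => exact ⟨_, p.concat h, by simp [edges_concat]⟩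

/-- The edge after `e` in a closed trail starts at the head of `e`, the edge before it ends at
its tail, and neither of them can be `e` again. -/
theorem IsTrail.not_mem_of_edges_isRotated {u v : V} {c : G.Walk u u} (hc : c.IsTrail)
    {e : Sym2 V} {l : List (Sym2 V)} (h : c.edges ~r e :: l)
    (hf : ∀ f ∈ l.head?, v ∈ f) (hg : ∀ g ∈ l.getLast?, v ∈ g) : v ∉ e := by
  obtain ⟨n, hn⟩ := h
  obtain ⟨w, c', hc'⟩ := c.exists_edges_eq_rotate n
  rw [hn] at hc'
  have hnodup : (e :: l).Nodup := hn ▸ List.nodup_rotate.mpr hc.edges_nodup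
  cases c' with
  | nil => simp at hc'
  | @cons _ x _ hadj p =>
    rw [edges_cons, List.cons.injEq] at hc'
    obtain ⟨rfl, rfl⟩ := hc'
    have hp : ¬ p.Nil := fun hp => hadj.ne hp.eq.symm
    have hpe : p.edges ≠ [] := edges_eq_nil.not.mpr hp
    have hfirst : s(x, p.snd) ≠ s(w, x) := fun heq =>
      (List.nodup_cons.mp hnodup).1 (heq ▸ p.mk_start_snd_mem_edges hp)
    have hlast : s(p.penultimate, w) ≠ s(w, x) := fun heq =>
      (List.nodup_cons.mp hnodup).1 (heq ▸ p.mk_penultimate_end_mem_edges hp)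
    have hvf : v ∈ s(x, p.snd) := hf _ (by simp [List.head?_eq_some_head hpe])
    have hvg : v ∈ s(p.penultimate, w) := hg _ (by simp [List.getLast?_eq_some_getLast hpe])
    intro hv
    rcases Sym2.mem_iff.mp hv with rfl | rfl
    · rcases Sym2.mem_iff.mp hvf with h | h
      · exact hadj.ne h
      · exact hfirst (by rw [← h, Sym2.eq_swap])
    · rcases Sym2.mem_iff.mp hvg with h | h
      · exact hlast (by rw [← h, Sym2.eq_swap])
      · exact hadj.ne h.symm

end SimpleGraph.Walk

section SubdividedDouble

open Walk

variable {V : Type*} {G : SimpleGraph V}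

@[simp]
theorem subdividedDouble_adj_inl_inr {p : V × Bool} {e : G.edgeSet} :
    (subdividedDouble G).Adj (.inl p) (.inr e) ↔ p.1 ∈ (e : Sym2 V) := by
  obtain ⟨v, _ | _⟩ := p <;> simp [subdividedDouble]

@[simp]
theorem subdividedDouble_adj_inr_inl {p : V × Bool} {e : G.edgeSet} :
    (subdividedDouble G).Adj (.inr e) (.inl p) ↔ p.1 ∈ (e : Sym2 V) := by
  rw [adj_comm, subdividedDouble_adj_inl_inr]

@[simp]
theorem not_subdividedDouble_adj_inl_inl {p q : V × Bool} :
    ¬ (subdividedDouble G).Adj (.inl p) (.inl q) := by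
  simp [subdividedDouble]

@[simp]
theorem not_subdividedDouble_adj_inr_inr {e f : G.edgeSet} :
    ¬ (subdividedDouble G).Adj (.inr e) (.inr f) := by
  simp [subdividedDouble]

def subdivisionSeq (l : List ((V × Bool) ⊕ G.edgeSet)) : List (Sym2 V) :=
  (l.filterMap Sum.getRight?).map Subtype.val

@[simp]
theorem subdivisionSeq_nil : subdivisionSeq ([] : List ((V × Bool) ⊕ G.edgeSet)) = [] := rfl

@[simp]
theorem subdivisionSeq_cons_inl (p : V × Bool) (l : List ((V × Bool) ⊕ G.edgeSet)) :
    subdivisionSeq (.inl p :: l) = subdivisionSeq l := rfl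

@[simp]
theorem subdivisionSeq_cons_inr (e : G.edgeSet) (l : List ((V × Bool) ⊕ G.edgeSet)) :
    subdivisionSeq (.inr e :: l) = (e : Sym2 V) :: subdivisionSeq l := rfl

@[simp]
theorem subdivisionSeq_append (l l' : List ((V × Bool) ⊕ G.edgeSet)) :
    subdivisionSeq (l ++ l') = subdivisionSeq l ++ subdivisionSeq l' := by
  simp [subdivisionSeq]

theorem subdivisionSeq_reverse (l : List ((V × Bool) ⊕ G.edgeSet)) :
    subdivisionSeq l.reverse = (subdivisionSeq l).reverse := by
  simp [subdivisionSeq, List.filterMap_reverse]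

theorem mem_subdivisionSeq {l : List ((V × Bool) ⊕ G.edgeSet)} {e : G.edgeSet} :
    (e : Sym2 V) ∈ subdivisionSeq l ↔ .inr e ∈ l := by
  simp [subdivisionSeq]

theorem List.Nodup.subdivisionSeq {l : List ((V × Bool) ⊕ G.edgeSet)} (hl : l.Nodup) :
    (subdivisionSeq l).Nodup :=
  (hl.filterMap fun _ _ _ h h' => by simp_all).map Subtype.val_injective

theorem List.IsRotated.subdivisionSeq {l l' : List ((V × Bool) ⊕ G.edgeSet)} (h : l ~r l') :
    subdivisionSeq l ~r subdivisionSeq l' :=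
  (h.filterMap _).map _

/-- On a cycle this is a hairpin in the usual sense, since a subdivision vertex has only two
neighbours on it. -/
def HasHairpin {x y : (V × Bool) ⊕ G.edgeSet} (W : (subdividedDouble G).Walk x y) : Prop :=
  ∃ (v : V) (e : G.edgeSet),
    s(.inl (v, false), .inr e) ∈ W.edges ∧ s(.inl (v, true), .inr e) ∈ W.edges

theorem HasHairpin.mono {x y x' y' : (V × Bool) ⊕ G.edgeSet}
    {W : (subdividedDouble G).Walk x y} {W' : (subdividedDouble G).Walk x' y'}
    (h : HasHairpin W) (hsub : W.edges ⊆ W'.edges) : HasHairpin W' :=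
  let ⟨v, e, hfalse, htrue⟩ := h
  ⟨v, e, hsub hfalse, hsub htrue⟩

theorem hasHairpin_of_mem_edges {x y : (V × Bool) ⊕ G.edgeSet}
    {W : (subdividedDouble G).Walk x y} {v : V} {e : G.edgeSet} {i j : Bool} (hij : i ≠ j)
    (hi : s(.inl (v, i), .inr e) ∈ W.edges) (hj : s(.inl (v, j), .inr e) ∈ W.edges) :
    HasHairpin W := by
  cases i <;> cases j <;> simp only [ne_eq, not_true_eq_false] at hij
  exacts [⟨v, e, hi, hj⟩, ⟨v, e, hj, hi⟩]

theorem hasHairpin_rotate [DecidableEq V] {x y : (V × Bool) ⊕ G.edgeSet}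
    {c : (subdividedDouble G).Walk x x} (hy : y ∈ c.support) :
    HasHairpin (c.rotate y hy) ↔ HasHairpin c :=
  ⟨fun h => h.mono (c.rotate_edges y hy).perm.subset,
    fun h => h.mono (c.rotate_edges y hy).perm.symm.subset⟩

theorem exists_walk_edges_eq_subdivisionSeq {y z : (V × Bool) ⊕ G.edgeSet}
    (W : (subdividedDouble G).Walk y z) {p q : V × Bool} (hy : y = .inl p) (hz : z = .inl q)
    (hW : W.IsTrail) (hnh : ¬ HasHairpin W) :
    ∃ c : G.Walk p.1 q.1, c.edges = subdivisionSeq W.support := by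
  match W with
  | .nil =>
    obtain rfl := Sum.inl_injective (hy.symm.trans hz)
    exact ⟨.nil, by simp [hy]⟩
  | .cons h .nil => subst hy hz; simp at h
  | .cons (v := .inl _) h₁ (.cons _ _) => subst hy; simp at h₁
  | .cons (v := .inr _) _ (.cons (v := .inr _) h₂ _) => simp at h₂
  | .cons (v := .inr e) h₁ (.cons (v := .inl p₂) h₂ W') =>
    subst hy
    simp only [subdividedDouble_adj_inl_inr, subdividedDouble_adj_inr_inl] at h₁ h₂
    have hne : p.1 ≠ p₂.1 := by
      intro hv
      have hb : p.2 ≠ p₂.2 := fun hb => by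
        have := hW.edges_nodup
        simp [Prod.ext hv hb, Sym2.eq_swap] at this
      exact hnh (hasHairpin_of_mem_edges (v := p.1) (e := e) hb (by simp)
        (by simp [hv, Sym2.eq_swap]))
    obtain ⟨c, hc⟩ := exists_walk_edges_eq_subdivisionSeq W' rfl hz hW.of_cons.of_cons
      fun h => hnh (h.mono fun _ h => by simp [h])
    have he : (e : Sym2 V) = s(p.1, p₂.1) := (Sym2.mem_and_mem_iff hne).mp ⟨h₁, h₂⟩
    exact ⟨.cons (G.mem_edgeSet.mp (he ▸ e.2)) c, by simp [hc, he]⟩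

theorem mem_of_mem_head?_subdivisionSeq {z : (V × Bool) ⊕ G.edgeSet} {p : V × Bool}
    (W : (subdividedDouble G).Walk (.inl p) z) :
    ∀ f ∈ (subdivisionSeq W.support).head?, p.1 ∈ f := by
  cases W with
  | nil => simp
  | @cons _ y _ h W =>
    rcases y with q | f
    · simp at h
    · rw [support_cons, subdivisionSeq_cons_inl, ← W.cons_tail_support,
        subdivisionSeq_cons_inr]
      simpa using h

theorem mem_of_mem_getLast?_subdivisionSeq {y : (V × Bool) ⊕ G.edgeSet} {q : V × Bool}
    (W : (subdividedDouble G).Walk y (.inl q)) :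
    ∀ g ∈ (subdivisionSeq W.support).getLast?, q.1 ∈ g := by
  simpa [subdivisionSeq_reverse] using mem_of_mem_head?_subdivisionSeq W.reverse

theorem exists_subdivisionSeq_eq_append_of_hairpin {e : G.edgeSet}
    {H : (subdividedDouble G).Walk (.inr e) (.inr e)} (hH : H.IsCycle) {v : V}
    (hfalse : s(.inl (v, false), .inr e) ∈ H.edges)
    (htrue : s(.inl (v, true), .inr e) ∈ H.edges) :
    ∃ l, subdivisionSeq H.support.tail = l ++ [(e : Sym2 V)] ∧
      (∀ f ∈ l.head?, v ∈ f) ∧ ∀ g ∈ l.getLast?, v ∈ g := by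
  cases H with
  | nil => exact absurd hH.not_nil (by simp)
  | @cons _ y _ h₁ W =>
    rcases y with p | f
    swap
    · simp at h₁
    have hW : ¬ W.Nil := fun h => Sum.inl_ne_inr h.eq
    obtain ⟨t, W', h₂, rfl⟩ :
        ∃ (t : _) (W' : (subdividedDouble G).Walk (.inl p) t) (h₂ : _), W = W'.concat h₂ :=
      ⟨_, _, _, (W.concat_dropLast (W.adj_penultimate hW)).symm⟩
    rcases t with q | f
    swap
    · simp at h₂
    have hnd : (W'.support ++ [Sum.inr e]).Nodup := by
      simpa [support_concat] using hH.support_nodup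
    have hends : ∀ i, s(.inl (v, i), .inr e) ∈ (cons h₁ (W'.concat h₂)).edges →
        (v, i) = p ∨ (v, i) = q := by
      intro i hi
      rw [edges_cons, edges_concat, List.concat_eq_append, List.mem_cons, List.mem_append,
        List.mem_singleton] at hi
      rcases hi with hp | hmid | hq
      · exact .inl (by simpa [Sym2.eq_swap] using hp)
      · exact absurd (W'.snd_mem_support_of_mem_edges hmid)
          (List.disjoint_of_nodup_append hnd · (by simp))
      · exact .inr (by simpa using hq)
    have hpq : p.1 = v ∧ q.1 = v := by
      rcases hends false hfalse with h | h <;> rcases hends true htrue with h' | h' <;>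
        grind
    refine ⟨subdivisionSeq W'.support, by simp [support_concat], ?_, ?_⟩
    · simpa [hpq.1] using mem_of_mem_head?_subdivisionSeq W'
    · simpa [hpq.2] using mem_of_mem_getLast?_subdivisionSeq W'

end SubdividedDouble

section HamiltonianCycle

variable {V : Type*} [DecidableEq V] {G : SimpleGraph V}

theorem exists_isEulerian_of_not_hasHairpin {p : V × Bool}
    {H : (subdividedDouble G).Walk (.inl p) (.inl p)} (hH : H.IsHamiltonianCycle)
    (hnh : ¬ HasHairpin H) :
    ∃ c : G.Walk p.1 p.1, c.IsEulerian ∧ c.edges = subdivisionSeq H.support.tail := by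
  obtain ⟨c, hc⟩ := exists_walk_edges_eq_subdivisionSeq H rfl rfl hH.isCycle.isTrail hnh
  rw [← H.cons_tail_support, subdivisionSeq_cons_inl] at hc
  have htrail : c.IsTrail := ⟨hc ▸ hH.isCycle.support_nodup.subdivisionSeq⟩
  refine ⟨c, htrail.isEulerian_of_forall_mem fun e he => ?_, hc⟩
  have hmem := hH.mem_support (.inr ⟨e, he⟩)
  rw [← H.cons_tail_support, List.mem_cons] at hmem
  rw [hc, ← Subtype.coe_mk e he, mem_subdivisionSeq]
  exact hmem.resolve_left Sum.inr_ne_inl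

end HamiltonianCycle

theorem subdividedDouble_no_hairpin_iff_eulerian_general {V : Type} [DecidableEq V]
    (G : SimpleGraph V)
    (x : (V × Bool) ⊕ ↥G.edgeSet) (H : (subdividedDouble G).Walk x x)
    (hH : H.IsHamiltonianCycle) :
    (¬ ∃ (v : V) (e : G.edgeSet),
        s(Sum.inl (v, false), Sum.inr e) ∈ H.edges ∧
        s(Sum.inl (v, true), Sum.inr e) ∈ H.edges) ↔
      ∃ (u : V) (c : G.Walk u u), c.IsEulerian ∧
        c.edges ~r ((H.support.tail.filterMap Sum.getRight?).map
          (fun e => (e : Sym2 V))) := by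
  -- the coercion `(e : Sym2 V)` above is inserted through the list monad
  have hseq : ∀ l : List ((V × Bool) ⊕ G.edgeSet),
      (l.filterMap Sum.getRight?).map (fun e => (e : Sym2 V)) = subdivisionSeq l :=
    fun l => by simp [subdivisionSeq]
  simp only [hseq]
  change ¬ HasHairpin H ↔ _
  constructor
  · intro hnh
    obtain ⟨v⟩ : Nonempty V := by
      rcases x with ⟨v, -⟩ | ⟨e, -⟩
      exacts [⟨v⟩, e.inductionOn fun v _ => ⟨v⟩]
    have hv := hH.mem_support (.inl (v, false))
    obtain ⟨c, hc, hcH⟩ := exists_isEulerian_of_not_hasHairpin (hH.rotate hv)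
      ((hasHairpin_rotate hv).not.mpr hnh)
    exact ⟨v, c, hc, hcH ▸ (H.support_rotate _ hv).subdivisionSeq⟩
  · rintro ⟨u, c, hc, hcH⟩ ⟨v, e, hfalse, htrue⟩
    have he := hH.mem_support (.inr e)
    have hsub := (H.rotate_edges _ he).perm.symm.subset
    obtain ⟨l, hl, hf, hg⟩ := exists_subdivisionSeq_eq_append_of_hairpin
      (hH.rotate he).isCycle (hsub hfalse) (hsub htrue)
    have hrot : c.edges ~r (e : Sym2 V) :: l :=
      hcH.trans ((H.support_rotate _ he).subdivisionSeq.symm.trans (hl ▸ List.isRotated_append))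
    exact hc.isTrail.not_mem_of_edges_isRotated hrot hf hg
      (by simpa using H.adj_of_mem_edges hfalse)

/-- A Hamiltonian cycle of the subdivided double has no hairpin (a two-edge path
`(v,0) – e – (v,1)` between the two twin copies of a vertex `v`) if and only if the cyclic
sequence of subdivision vertices it visits is the edge sequence of an Eulerian circuit
of `G` (up to rotation of the cyclic order). -/
theorem subdividedDouble_no_hairpin_iff_eulerian {V : Type} [Fintype V] [DecidableEq V]
    (G : SimpleGraph V) [DecidableRel G.Adj]
    (hconn : G.Connected) (hreg : G.IsRegularOfDegree 4)
    (x : (V × Bool) ⊕ ↥G.edgeSet) (H : (subdividedDouble G).Walk x x)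
    (hH : H.IsHamiltonianCycle) :
    (¬ ∃ (v : V) (e : G.edgeSet),
        s(Sum.inl (v, false), Sum.inr e) ∈ H.edges ∧
        s(Sum.inl (v, true), Sum.inr e) ∈ H.edges) ↔
      ∃ (u : V) (c : G.Walk u u), c.IsEulerian ∧
        c.edges ~r ((H.support.tail.filterMap Sum.getRight?).map
          (fun e => (e : Sym2 V))) :=
  subdividedDouble_no_hairpin_iff_eulerian_general G x H hH
end

section
/- Let G be a connected 4-regular simple graph with at least two vertices, let H be a Hamiltonian cycle in the subdivided double D(G), and let v be a vertex of G with twin copies (v,0) and (v,1). Then exactly one of the following holds: (i) the edges of H incident to (v,0) or (v,1) form two vertex-disjoint two-edge paths, one centered at (v,0) and one centered at (v,1), whose four endpoints are four distinct subdivision vertices; or (ii) they form a single four-edge path a–(v,i)–b–(v,1−i)–c through three distinct subdivision vertices a, b, c, containing exactly one hairpin. -/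
open SimpleGraph

/-!
Each twin `(v, i)` has exactly two neighbours on `H`, and both are subdivision vertices. If the
two pairs are disjoint we are in case (i), if they share exactly one vertex in case (ii). They
cannot coincide: the twins and their two common neighbours would then form a 4-cycle closed under
`H`-adjacency, hence all of `D(G)`, whereas a third edge at `v` is a vertex of `D(G)` outside it.
-/

namespace SimpleGraph

variable {W : Type*} {G : SimpleGraph W}

theorem Preconnected.mem_of_adj_closed (hG : G.Preconnected) {S : Set W}
    (hS : ∀ u w, G.Adj u w → u ∈ S → w ∈ S) {u : W} (hu : u ∈ S) (w : W) : w ∈ S := by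
  by_contra hw
  obtain ⟨p⟩ := hG u w
  obtain ⟨d, -, hd, hd'⟩ := p.exists_boundary_dart S hu hw
  exact hd' (hS _ _ d.adj hd)

namespace Walk

theorem setOf_mem_edges_and_mem_or_mem_eq {u w : W} (p : G.Walk u w) {y₀ y₁ a b c d : W}
    (h₀ : p.toSubgraph.neighborSet y₀ = {a, b}) (h₁ : p.toSubgraph.neighborSet y₁ = {c, d}) :
    {f | f ∈ p.edges ∧ (y₀ ∈ f ∨ y₁ ∈ f)} = {s(y₀, a), s(y₀, b), s(y₁, c), s(y₁, d)} := by
  have incident (y : W) (f : Sym2 W) :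
      f ∈ p.edges ∧ y ∈ f ↔ ∃ z ∈ p.toSubgraph.neighborSet y, f = s(y, z) := by
    rw [and_comm, Sym2.mem_iff_exists]
    constructor
    · rintro ⟨⟨z, rfl⟩, hf⟩
      exact ⟨z, adj_toSubgraph_iff_mem_edges.mpr hf, rfl⟩
    · rintro ⟨z, hz, rfl⟩
      exact ⟨⟨z, rfl⟩, adj_toSubgraph_iff_mem_edges.mp hz⟩
  ext f
  simp only [Set.mem_ofPred_eq, and_or_left, incident, h₀, h₁, Set.mem_insert_iff,
    Set.mem_singleton_iff, exists_eq_or_imp, exists_eq_left]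
  tauto

variable [DecidableEq W] {x : W} {H : G.Walk x x}

theorem IsHamiltonianCycle.mem_of_adj_closed (hH : H.IsHamiltonianCycle) {S : Set W}
    (hS : ∀ u ∈ S, H.toSubgraph.neighborSet u ⊆ S) {u : W} (hu : u ∈ S) (w : W) : w ∈ S :=
  H.toSubgraph_connected.coe.preconnected.mem_of_adj_closed (S := Subtype.val ⁻¹' S)
    (fun u _ huw hu => hS u hu huw) (u := ⟨u, H.mem_verts_toSubgraph.mpr (hH.mem_support u)⟩) hu
    ⟨w, H.mem_verts_toSubgraph.mpr (hH.mem_support w)⟩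

theorem IsHamiltonianCycle.ncard_neighborSet_toSubgraph (hH : H.IsHamiltonianCycle) (y : W) :
    (H.toSubgraph.neighborSet y).ncard = 2 :=
  hH.isCycle.ncard_neighborSet_toSubgraph_eq_two (hH.mem_support y)

theorem IsHamiltonianCycle.neighborSet_toSubgraph_eq_pair (hH : H.IsHamiltonianCycle)
    {y p q : W} (hp : H.toSubgraph.Adj y p) (hq : H.toSubgraph.Adj y q) (hpq : p ≠ q) :
    H.toSubgraph.neighborSet y = {p, q} := by
  have hcard := hH.ncard_neighborSet_toSubgraph y
  refine (Set.eq_of_subset_of_ncard_le ?_ ?_ (Set.finite_of_ncard_ne_zero (by omega))).symm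
  · exact Set.insert_subset_iff.mpr ⟨hp, Set.singleton_subset_iff.mpr hq⟩
  · rw [hcard, Set.ncard_pair hpq]

theorem IsHamiltonianCycle.mem_of_neighborSet_toSubgraph_eq_pair (hH : H.IsHamiltonianCycle)
    {y₀ y₁ p q : W} (hy : y₀ ≠ y₁) (h₀ : H.toSubgraph.neighborSet y₀ = {p, q})
    (h₁ : H.toSubgraph.neighborSet y₁ = {p, q}) (w : W) : w ∈ ({y₀, y₁, p, q} : Set W) := by
  have adj₀ (z : W) : H.toSubgraph.Adj y₀ z ↔ z = p ∨ z = q := Set.ext_iff.mp h₀ z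
  have adj₁ (z : W) : H.toSubgraph.Adj y₁ z ↔ z = p ∨ z = q := Set.ext_iff.mp h₁ z
  have hp : H.toSubgraph.neighborSet p = {y₀, y₁} :=
    hH.neighborSet_toSubgraph_eq_pair ((adj₀ p).mpr (.inl rfl)).symm
      ((adj₁ p).mpr (.inl rfl)).symm hy
  have hq : H.toSubgraph.neighborSet q = {y₀, y₁} :=
    hH.neighborSet_toSubgraph_eq_pair ((adj₀ q).mpr (.inr rfl)).symm
      ((adj₁ q).mpr (.inr rfl)).symm hy
  refine hH.mem_of_adj_closed ?_ (Set.mem_insert y₀ _) w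
  rintro u (rfl | rfl | rfl | rfl) <;> simp [h₀, h₁, hp, hq, Set.insert_subset_iff]

end Walk

end SimpleGraph

theorem subdividedDouble_adj_inl {V : Type*} {G : SimpleGraph V} {v : V} {i : Bool}
    {w : (V × Bool) ⊕ G.edgeSet}
    (h : (subdividedDouble G).Adj (Sum.inl (v, i)) w) : ∃ e : G.edgeSet, w = Sum.inr e := by
  obtain ⟨-, ⟨_, _, e, -, rfl, -⟩ | ⟨_, _, _, _, ⟨⟩, _⟩⟩ := h
  exact ⟨e, rfl⟩

namespace SimpleGraph.Walk.IsHamiltonianCycle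

variable {V : Type*} [DecidableEq V] {G : SimpleGraph V} {x : (V × Bool) ⊕ G.edgeSet}
  {H : (subdividedDouble G).Walk x x}

theorem exists_twin_neighborSet_eq (hH : H.IsHamiltonianCycle) (v : V) (i : Bool) :
    ∃ a b : G.edgeSet,
      a ≠ b ∧ H.toSubgraph.neighborSet (Sum.inl (v, i)) = {Sum.inr a, Sum.inr b} := by
  obtain ⟨p, q, hpq, hN⟩ := Set.ncard_eq_two.mp (hH.ncard_neighborSet_toSubgraph (Sum.inl (v, i)))
  have hp : p ∈ H.toSubgraph.neighborSet (Sum.inl (v, i)) := by simp [hN]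
  have hq : q ∈ H.toSubgraph.neighborSet (Sum.inl (v, i)) := by simp [hN]
  obtain ⟨a, rfl⟩ := subdividedDouble_adj_inl hp.adj_sub
  obtain ⟨b, rfl⟩ := subdividedDouble_adj_inl hq.adj_sub
  exact ⟨a, b, fun hab => hpq (congrArg Sum.inr hab), hN⟩

theorem twin_neighborSet_ne (hH : H.IsHamiltonianCycle) {v : V} [Fintype (G.neighborSet v)]
    (hv : 2 < G.degree v) :
    H.toSubgraph.neighborSet (Sum.inl (v, false)) ≠
      H.toSubgraph.neighborSet (Sum.inl (v, true)) := by
  obtain ⟨a, b, -, h₀⟩ := hH.exists_twin_neighborSet_eq v false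
  intro h₁
  obtain ⟨e, he, heab⟩ := Finset.exists_mem_notMem_of_card_lt_card
    ((Finset.card_le_two (a := (a : Sym2 V)) (b := b)).trans_lt
      (hv.trans_eq (card_incidenceFinset_eq_degree G v).symm))
  have hmem := hH.mem_of_neighborSet_toSubgraph_eq_pair (by simp) h₀ (h₁ ▸ h₀)
    (Sum.inr ⟨e, (G.mem_incidenceFinset v e).mp he |>.1⟩)
  simp only [Set.mem_insert_iff, Set.mem_singleton_iff, reduceCtorEq, Sum.inr.injEq, false_or]
    at hmem
  simp only [Finset.mem_insert, Finset.mem_singleton] at heab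
  rcases hmem with rfl | rfl <;> simp at heab

end SimpleGraph.Walk.IsHamiltonianCycle

theorem xor_twin_stars_disjoint_or_hairpin {A B : Type*} {v : A} {a b c d : B} (hab : a ≠ b)
    (hcd : c ≠ d) (hne : ¬(a = c ∧ b = d ∨ a = d ∧ b = c)) :
    Xor
      (∃ a' b' c' d' : B, a' ≠ b' ∧ a' ≠ c' ∧ a' ≠ d' ∧ b' ≠ c' ∧ b' ≠ d' ∧ c' ≠ d' ∧
        ({s(Sum.inl (v, false), Sum.inr a), s(Sum.inl (v, false), Sum.inr b),
            s(Sum.inl (v, true), Sum.inr c), s(Sum.inl (v, true), Sum.inr d)} :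
            Set (Sym2 ((A × Bool) ⊕ B))) =
          {s(Sum.inl (v, false), Sum.inr a'), s(Sum.inl (v, false), Sum.inr b'),
            s(Sum.inl (v, true), Sum.inr c'), s(Sum.inl (v, true), Sum.inr d')})
      (∃ (i : Bool) (a' b' c' : B), a' ≠ b' ∧ a' ≠ c' ∧ b' ≠ c' ∧
        ({s(Sum.inl (v, false), Sum.inr a), s(Sum.inl (v, false), Sum.inr b),
            s(Sum.inl (v, true), Sum.inr c), s(Sum.inl (v, true), Sum.inr d)} :
            Set (Sym2 ((A × Bool) ⊕ B))) =
          {s(Sum.inl (v, i), Sum.inr a'), s(Sum.inl (v, i), Sum.inr b'),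
            s(Sum.inl (v, !i), Sum.inr b'), s(Sum.inl (v, !i), Sum.inr c')}) := by
  rw [xor_iff_or_and_not_and]
  refine ⟨?_, ?_⟩
  · by_cases hdisj : a ≠ c ∧ a ≠ d ∧ b ≠ c ∧ b ≠ d
    · exact .inl ⟨a, b, c, d, hab, hdisj.1, hdisj.2.1, hdisj.2.2.1, hdisj.2.2.2, hcd, rfl⟩
    · refine .inr ⟨false, ?_⟩
      simp only [Bool.not_false]
      rcases (by tauto : a = c ∨ a = d ∨ b = c ∨ b = d) with rfl | rfl | rfl | rfl
      · exact ⟨b, a, d, hab.symm, by tauto, by tauto, Set.insert_comm _ _ _⟩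
      · exact ⟨b, a, c, hab.symm, by tauto, by tauto, by rw [Set.insert_comm, Set.pair_comm]⟩
      · exact ⟨a, b, d, hab, by tauto, by tauto, rfl⟩
      · exact ⟨a, b, c, hab, by tauto, by tauto, by rw [Set.pair_comm]⟩
  · rintro ⟨⟨a', b', c', d', -, hac, had, hbc, hbd, -, hP⟩, ⟨i, p, q, r, -, -, -, hQ⟩⟩
    -- the twins share the neighbour `q` in the second description, but none in the first
    have hq (j : Bool) : s(Sum.inl (v, j), Sum.inr q) ∈
        ({s(Sum.inl (v, false), Sum.inr a'), s(Sum.inl (v, false), Sum.inr b'),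
          s(Sum.inl (v, true), Sum.inr c'), s(Sum.inl (v, true), Sum.inr d')} :
          Set (Sym2 ((A × Bool) ⊕ B))) := by
      rw [← hP, hQ]; cases i <;> cases j <;> simp
    have hq₀ : q = a' ∨ q = b' := by simpa using hq false
    have hq₁ : q = c' ∨ q = d' := by simpa using hq true
    rcases hq₀ with rfl | rfl <;> rcases hq₁ with rfl | rfl <;> contradiction

theorem subdividedDouble_twin_neighborhood_general {V : Type} [Fintype V] [DecidableEq V]
    (G : SimpleGraph V) [DecidableRel G.Adj]
    (hreg : G.IsRegularOfDegree 4)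
    (x : (V × Bool) ⊕ ↥G.edgeSet) (H : (subdividedDouble G).Walk x x)
    (hH : H.IsHamiltonianCycle) (v : V) :
    Xor'
      (∃ a b c d : G.edgeSet, a ≠ b ∧ a ≠ c ∧ a ≠ d ∧ b ≠ c ∧ b ≠ d ∧ c ≠ d ∧
        {f | f ∈ H.edges ∧ (Sum.inl (v, false) ∈ f ∨ Sum.inl (v, true) ∈ f)} =
          ({s(Sum.inl (v, false), Sum.inr a), s(Sum.inl (v, false), Sum.inr b),
            s(Sum.inl (v, true), Sum.inr c), s(Sum.inl (v, true), Sum.inr d)} :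
            Set (Sym2 ((V × Bool) ⊕ ↥G.edgeSet))))
      (∃ (i : Bool) (a b c : G.edgeSet), a ≠ b ∧ a ≠ c ∧ b ≠ c ∧
        {f | f ∈ H.edges ∧ (Sum.inl (v, false) ∈ f ∨ Sum.inl (v, true) ∈ f)} =
          ({s(Sum.inl (v, i), Sum.inr a), s(Sum.inl (v, i), Sum.inr b),
            s(Sum.inl (v, !i), Sum.inr b), s(Sum.inl (v, !i), Sum.inr c)} :
            Set (Sym2 ((V × Bool) ⊕ ↥G.edgeSet)))) := by
  obtain ⟨a, b, hab, h₀⟩ := hH.exists_twin_neighborSet_eq v false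
  obtain ⟨c, d, hcd, h₁⟩ := hH.exists_twin_neighborSet_eq v true
  have hne := hH.twin_neighborSet_ne (v := v) (by rw [hreg v]; norm_num)
  rw [h₀, h₁, Ne, Set.pair_eq_pair_iff] at hne
  simp only [Sum.inr.injEq] at hne
  rw [H.setOf_mem_edges_and_mem_or_mem_eq h₀ h₁]
  exact xor_twin_stars_disjoint_or_hairpin hab hcd hne

/-- In a Hamiltonian cycle `H` of the subdivided double, for each vertex `v` of `G`,
exactly one of the following holds: (i) the edges of `H` incident to the twins `(v,0)`,
`(v,1)` form two vertex-disjoint two-edge paths, centered at `(v,0)` and `(v,1)`, whose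
endpoints are four distinct subdivision vertices; or (ii) they form a single four-edge path
`a – (v,i) – b – (v,¬i) – c` through three distinct subdivision vertices, containing
exactly one hairpin. -/
theorem subdividedDouble_twin_neighborhood {V : Type} [Fintype V] [DecidableEq V]
    (G : SimpleGraph V) [DecidableRel G.Adj] (hcard : 2 ≤ Fintype.card V)
    (hconn : G.Connected) (hreg : G.IsRegularOfDegree 4)
    (x : (V × Bool) ⊕ ↥G.edgeSet) (H : (subdividedDouble G).Walk x x)
    (hH : H.IsHamiltonianCycle) (v : V) :
    Xor'
      (∃ a b c d : G.edgeSet, a ≠ b ∧ a ≠ c ∧ a ≠ d ∧ b ≠ c ∧ b ≠ d ∧ c ≠ d ∧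
        {f | f ∈ H.edges ∧ (Sum.inl (v, false) ∈ f ∨ Sum.inl (v, true) ∈ f)} =
          ({s(Sum.inl (v, false), Sum.inr a), s(Sum.inl (v, false), Sum.inr b),
            s(Sum.inl (v, true), Sum.inr c), s(Sum.inl (v, true), Sum.inr d)} :
            Set (Sym2 ((V × Bool) ⊕ ↥G.edgeSet))))
      (∃ (i : Bool) (a b c : G.edgeSet), a ≠ b ∧ a ≠ c ∧ b ≠ c ∧
        {f | f ∈ H.edges ∧ (Sum.inl (v, false) ∈ f ∨ Sum.inl (v, true) ∈ f)} =
          ({s(Sum.inl (v, i), Sum.inr a), s(Sum.inl (v, i), Sum.inr b),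
            s(Sum.inl (v, !i), Sum.inr b), s(Sum.inl (v, !i), Sum.inr c)} :
            Set (Sym2 ((V × Bool) ⊕ ↥G.edgeSet)))) :=
  subdividedDouble_twin_neighborhood_general G hreg x H hH v
end

section
/- Let G be a connected 4-regular simple graph with at least two vertices, let H be a Hamiltonian cycle in the subdivided double D(G), and let v be a vertex of G. Then H contains a hairpin through the twin pair (v,0), (v,1) if and only if the complement of H in D(G) (the 2-regular spanning subgraph of D(G) whose edge set is E(D(G)) \ E(H)) contains a hairpin through the twin pair (v,0), (v,1). -/
/-!
In a cycle every vertex lies on exactly two edges. The twins `(v,0)`, `(v,1)` of `D(G)` share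
their four neighbours, the subdivision vertices of the edges at `v`. Among these, let `A` and `B`
be the neighbours joined to `(v,0)`, resp. `(v,1)`, along `H`; then `|A| = |B| = 2`, so
inclusion–exclusion gives `|A ∩ B| = 4 - |A ∪ B|`. A hairpin of `H` is a point of `A ∩ B`, a
hairpin of the complement a point outside `A ∪ B`.
-/

open SimpleGraph

theorem Set.inter_nonempty_iff_sdiff_union_nonempty {α : Type*} {s t u : Set α}
    (hu : u.Finite) (hs : s ⊆ u) (ht : t ⊆ u) (hcard : s.ncard + t.ncard = u.ncard) :
    (s ∩ t).Nonempty ↔ (u \ (s ∪ t)).Nonempty := by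
  have hst : s ∪ t ⊆ u := Set.union_subset hs ht
  have hcard_eq : (s ∩ t).ncard = (u \ (s ∪ t)).ncard := by
    have := Set.ncard_union_add_ncard_inter s t (hu.subset hs) (hu.subset ht)
    rw [Set.ncard_sdiff hst (hu.subset hst)]
    omega
  rw [← Set.ncard_pos ((hu.subset hs).inter_of_left t), ← Set.ncard_pos hu.sdiff, hcard_eq]

theorem SimpleGraph.Walk.IsCycle.exists_shared_mem_edges_iff_exists_shared_notMem_edges
    {W : Type*} {Γ : SimpleGraph W} {u a b : W} {p : Γ.Walk u u} (hp : p.IsCycle)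
    (ha : a ∈ p.support) (hb : b ∈ p.support) (hN : Γ.neighborSet a = Γ.neighborSet b)
    (hdeg : (Γ.neighborSet a).ncard = 4) :
    (∃ y, s(a, y) ∈ p.edges ∧ s(b, y) ∈ p.edges) ↔
      ∃ y, (s(a, y) ∈ Γ.edgeSet ∧ s(a, y) ∉ p.edges) ∧
        (s(b, y) ∈ Γ.edgeSet ∧ s(b, y) ∉ p.edges) := by
  have key := Set.inter_nonempty_iff_sdiff_union_nonempty
    (Set.finite_of_ncard_ne_zero (by omega)) (p.toSubgraph.neighborSet_subset a)
    (hN ▸ p.toSubgraph.neighborSet_subset b)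
    (by rw [hp.ncard_neighborSet_toSubgraph_eq_two ha,
      hp.ncard_neighborSet_toSubgraph_eq_two hb, hdeg])
  simp only [Set.Nonempty, Set.mem_inter_iff, Set.mem_sdiff, Set.mem_union,
    Subgraph.mem_neighborSet, adj_toSubgraph_iff_mem_edges, mem_neighborSet] at key
  have hadj : ∀ y, Γ.Adj b y ↔ Γ.Adj a y := fun y => (Set.ext_iff.mp hN y).symm
  rw [key]
  simp only [SimpleGraph.mem_edgeSet, hadj, not_or]
  exact exists_congr fun y => by tauto

section SubdividedDouble

variable {V : Type*} {G : SimpleGraph V}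

theorem subdividedDouble_adj_inl_iff {v : V} {i : Bool} {y : (V × Bool) ⊕ G.edgeSet} :
    (subdividedDouble G).Adj (Sum.inl (v, i)) y ↔
      ∃ e : G.edgeSet, y = Sum.inr e ∧ v ∈ (e : Sym2 V) := by
  rw [subdividedDouble, fromRel_adj]
  constructor
  · rintro ⟨-, ⟨w, j, e, hx, rfl, hw⟩ | ⟨w, j, e, -, hy, -⟩⟩
    · obtain ⟨rfl, rfl⟩ := Prod.mk.inj (Sum.inl.inj hx)
      exact ⟨e, rfl, hw⟩
    · cases hy
  · rintro ⟨e, rfl, hv⟩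
    exact ⟨Sum.inl_ne_inr, Or.inl ⟨v, i, e, rfl, rfl, hv⟩⟩

theorem subdividedDouble_neighborSet_inl (v : V) (i : Bool) :
    (subdividedDouble G).neighborSet (Sum.inl (v, i)) =
      Sum.inr '' {e : G.edgeSet | v ∈ (e : Sym2 V)} := by
  ext y
  simp only [mem_neighborSet, subdividedDouble_adj_inl_iff, Set.mem_image, Set.mem_ofPred_eq]
  exact exists_congr fun e => and_comm.trans (and_congr_right' eq_comm)

theorem ncard_subdividedDouble_neighborSet_inl [Fintype V] [DecidableRel G.Adj] (v : V)
    (i : Bool) :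
    ((subdividedDouble G).neighborSet (Sum.inl (v, i))).ncard = G.degree v := by
  classical
  have hinc : Subtype.val '' {e : G.edgeSet | v ∈ (e : Sym2 V)} = G.incidenceSet v := by
    ext e
    simp [incidenceSet, and_comm]
  rw [subdividedDouble_neighborSet_inl, Set.ncard_image_of_injective _ Sum.inr_injective,
    ← Set.ncard_image_of_injective _ Subtype.val_injective, hinc,
    Set.ncard_eq_toFinset_card', Set.toFinset_card, card_incidenceSet_eq_degree]

end SubdividedDouble

theorem subdividedDouble_hairpin_iff_complement_hairpin_general {V : Type} [Fintype V] [DecidableEq V]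
    (G : SimpleGraph V) [DecidableRel G.Adj]
    (hreg : G.IsRegularOfDegree 4)
    (x : (V × Bool) ⊕ ↥G.edgeSet) (H : (subdividedDouble G).Walk x x)
    (hH : H.IsHamiltonianCycle) (v : V) :
    (∃ e : G.edgeSet,
        s(Sum.inl (v, false), Sum.inr e) ∈ H.edges ∧
        s(Sum.inl (v, true), Sum.inr e) ∈ H.edges) ↔
      (∃ e : G.edgeSet,
        (s(Sum.inl (v, false), Sum.inr e) ∈ (subdividedDouble G).edgeSet ∧
          s(Sum.inl (v, false), Sum.inr e) ∉ H.edges) ∧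
        (s(Sum.inl (v, true), Sum.inr e) ∈ (subdividedDouble G).edgeSet ∧
          s(Sum.inl (v, true), Sum.inr e) ∉ H.edges)) := by
  have key := hH.isCycle.exists_shared_mem_edges_iff_exists_shared_notMem_edges
    (hH.mem_support (Sum.inl (v, false))) (hH.mem_support (Sum.inl (v, true)))
    (by rw [subdividedDouble_neighborSet_inl, subdividedDouble_neighborSet_inl])
    ((ncard_subdividedDouble_neighborSet_inl v false).trans (hreg v))
  have exists_inr : ∀ {P : (V × Bool) ⊕ G.edgeSet → Prop},
      (∀ y, P y → (subdividedDouble G).Adj (Sum.inl (v, false)) y) →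
        ((∃ y, P y) ↔ ∃ e, P (Sum.inr e)) := by
    refine fun hP => ⟨fun ⟨y, hy⟩ => ?_, fun ⟨e, he⟩ => ⟨_, he⟩⟩
    obtain ⟨e, rfl, -⟩ := subdividedDouble_adj_inl_iff.mp (hP y hy)
    exact ⟨e, hy⟩
  rwa [exists_inr fun y hy => H.adj_of_mem_edges hy.1,
    exists_inr fun y hy => (SimpleGraph.mem_edgeSet _).mp hy.1.1] at key

/-- A Hamiltonian cycle `H` of the subdivided double contains a hairpin through the twin
pair `(v,0)`, `(v,1)` if and only if its complement (the spanning subgraph of `D(G)` on the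
edges of `D(G)` not used by `H`) contains a hairpin through the same twin pair. -/
theorem subdividedDouble_hairpin_iff_complement_hairpin {V : Type} [Fintype V] [DecidableEq V]
    (G : SimpleGraph V) [DecidableRel G.Adj] (hcard : 2 ≤ Fintype.card V)
    (hconn : G.Connected) (hreg : G.IsRegularOfDegree 4)
    (x : (V × Bool) ⊕ ↥G.edgeSet) (H : (subdividedDouble G).Walk x x)
    (hH : H.IsHamiltonianCycle) (v : V) :
    (∃ e : G.edgeSet,
        s(Sum.inl (v, false), Sum.inr e) ∈ H.edges ∧
        s(Sum.inl (v, true), Sum.inr e) ∈ H.edges) ↔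
      (∃ e : G.edgeSet,
        (s(Sum.inl (v, false), Sum.inr e) ∈ (subdividedDouble G).edgeSet ∧
          s(Sum.inl (v, false), Sum.inr e) ∉ H.edges) ∧
        (s(Sum.inl (v, true), Sum.inr e) ∈ (subdividedDouble G).edgeSet ∧
          s(Sum.inl (v, true), Sum.inr e) ∉ H.edges)) :=
  subdividedDouble_hairpin_iff_complement_hairpin_general G hreg x H hH v
end

section
/- Let G be a 4-regular simple graph and let v be a vertex of G such that the edge set of the vertex-deleted subgraph G − v can be partitioned into two linear forests. Then G has a Hamiltonian decomposition: its edge set can be partitioned into two Hamiltonian cycles. (Indeed, the two linear forests are necessarily two Hamiltonian paths of G − v whose endpoints are the four neighbors of v, and adding v back joins each path into a Hamiltonian cycle of G.) -/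
open SimpleGraph

/-- A linear forest: an acyclic graph of maximum degree at most two, i.e. a
vertex-disjoint union of paths. -/
def IsLinearForest {W : Type*} (F : SimpleGraph W) : Prop :=
  F.IsAcyclic ∧ ∀ v, (F.neighborSet v).ncard ≤ 2

/-!
In `G - v` the neighbours of `v` have degree 3 and all other vertices degree 4. As both forests
have maximum degree 2, each has minimum degree 1, every leaf of either forest is a neighbour of
`v`, and every neighbour of `v` is a leaf of exactly one forest. A finite linear forest without
isolated vertices has at least two leaves, so each forest has exactly two of the four. Joining `v`
to the two leaves of a forest gives a connected 2-regular graph (every vertex reaches a leaf),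
that is, a Hamiltonian cycle of `G`, and the two cycles so obtained partition the edges of `G`.
-/

namespace SimpleGraph

variable {V : Type*}

section Degrees

lemma ncard_neighborSet_eq_degree (G : SimpleGraph V) [G.LocallyFinite] (u : V) :
    (G.neighborSet u).ncard = G.degree u := by
  rw [← coe_neighborFinset, Set.ncard_coe_finset, card_neighborFinset_eq_degree]

lemma ncard_neighborSet_sup [Finite V] {G H : SimpleGraph V} (h : Disjoint G H) (u : V) :
    ((G ⊔ H).neighborSet u).ncard = (G.neighborSet u).ncard + (H.neighborSet u).ncard := by
  rw [neighborSet_sup, Set.ncard_union_eq (disjoint_neighborSet.mpr h u)]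

lemma ncard_neighborSet_induce_add [Finite V] (G : SimpleGraph V) [DecidableRel G.Adj] {v : V}
    (u : {u : V | u ≠ v}) :
    ((G.induce {u | u ≠ v}).neighborSet u).ncard + (if G.Adj u v then 1 else 0) =
      (G.neighborSet u).ncard := by
  have himage : Subtype.val '' (G.induce {u | u ≠ v}).neighborSet u = G.neighborSet u \ {v} := by
    ext a
    constructor
    · rintro ⟨a, ha, rfl⟩
      exact ⟨ha, a.2⟩
    · rintro ⟨ha, hav⟩
      exact ⟨⟨a, hav⟩, ha, rfl⟩
  rw [← Set.ncard_image_of_injective _ Subtype.val_injective, himage]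
  split_ifs with h
  · exact Set.ncard_sdiff_singleton_add_one h
  · rw [Set.sdiff_singleton_eq_self (s := G.neighborSet u) h, add_zero]

lemma ncard_setOf_adj_val (G : SimpleGraph V) (v : V) :
    {u : {u : V | u ≠ v} | G.Adj u v}.ncard = (G.neighborSet v).ncard := by
  rw [← Set.ncard_image_of_injective _ Subtype.val_injective]
  congr 1
  ext a
  constructor
  · rintro ⟨a, ha, rfl⟩
    exact ha.symm
  · intro ha
    exact ⟨⟨a, ha.ne'⟩, ha.symm, rfl⟩

end Degrees

section Leaves

variable {G : SimpleGraph V}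

def leaves (G : SimpleGraph V) : Set V := {u | (G.neighborSet u).ncard = 1}

lemma exists_isPath_forall_adj_mem_support [Fintype V] (G : SimpleGraph V) (u : V) :
    ∃ (w : V) (p : G.Walk u w), p.IsPath ∧ ∀ x, G.Adj w x → x ∈ p.support := by
  by_contra! h
  have hlong : ∀ n, ∃ (w : V) (p : G.Walk u w), p.IsPath ∧ p.length = n := by
    intro n
    induction n with
    | zero => exact ⟨u, .nil, .nil, rfl⟩
    | succ n ih =>
      obtain ⟨w, p, hp, rfl⟩ := ih
      obtain ⟨x, hwx, hx⟩ := h w p hp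
      exact ⟨x, p.concat hwx, hp.concat hx hwx, p.length_concat hwx⟩
  obtain ⟨w, p, hp, hlen⟩ := hlong (Fintype.card V)
  exact hp.length_lt.ne hlen

lemma IsAcyclic.ncard_neighborSet_le_one_of_forall_adj_mem_support [Finite V]
    (hG : G.IsAcyclic) {u w : V} {p : G.Walk u w} (hp : p.IsPath)
    (hmax : ∀ x, G.Adj w x → x ∈ p.support) : (G.neighborSet w).ncard ≤ 1 :=
  (Set.ncard_le_one_iff).mpr fun hx hy =>
    (hG.eq_penultimate_of_adj_end hp hx (hmax _ hx)).trans
      (hG.eq_penultimate_of_adj_end hp hy (hmax _ hy)).symm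

lemma IsAcyclic.exists_reachable_mem_leaves [Fintype V] (hG : G.IsAcyclic)
    (hmin : ∀ u, 1 ≤ (G.neighborSet u).ncard) (u : V) : ∃ w ∈ G.leaves, G.Reachable u w := by
  obtain ⟨w, p, hp, hmax⟩ := G.exists_isPath_forall_adj_mem_support u
  exact ⟨w, (hG.ncard_neighborSet_le_one_of_forall_adj_mem_support hp hmax).antisymm (hmin w),
    ⟨p⟩⟩

lemma IsAcyclic.two_le_ncard_leaves [Fintype V] [Nonempty V] (hG : G.IsAcyclic)
    (hmin : ∀ u, 1 ≤ (G.neighborSet u).ncard) : 2 ≤ G.leaves.ncard := by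
  obtain ⟨a, ha, -⟩ := hG.exists_reachable_mem_leaves hmin (Classical.arbitrary V)
  obtain ⟨b, p, hp, hmax⟩ := G.exists_isPath_forall_adj_mem_support a
  have hb : b ∈ G.leaves :=
    (hG.ncard_neighborSet_le_one_of_forall_adj_mem_support hp hmax).antisymm (hmin b)
  have hab : a ≠ b := by
    rintro rfl
    obtain ⟨x, hx⟩ := Set.nonempty_of_ncard_ne_zero (s := G.neighborSet a) (by simp [ha.out])
    have hsupp := Walk.nil_iff_support_eq.mp (Walk.isPath_iff_nil.mp hp)
    have hxa : x = a := by simpa [hsupp] using hmax x hx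
    exact (show G.Adj a x from hx).ne hxa.symm
  exact (Set.one_lt_ncard).mpr ⟨a, ha, b, hb, hab⟩

end Leaves

section DegreeSplit

variable {F₁ F₂ : SimpleGraph V} {P : V → Prop} [DecidablePred P]

lemma one_le_ncard_neighborSet_of_degree_split
    (hsplit : ∀ u, (F₁.neighborSet u).ncard + (F₂.neighborSet u).ncard +
      (if P u then 1 else 0) = 4)
    (hmax₂ : ∀ u, (F₂.neighborSet u).ncard ≤ 2) (u : V) : 1 ≤ (F₁.neighborSet u).ncard := by
  have := hsplit u
  have := hmax₂ u
  split_ifs at * <;> omega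

lemma leaves_union_leaves_of_degree_split
    (hsplit : ∀ u, (F₁.neighborSet u).ncard + (F₂.neighborSet u).ncard +
      (if P u then 1 else 0) = 4)
    (hmax₁ : ∀ u, (F₁.neighborSet u).ncard ≤ 2) (hmax₂ : ∀ u, (F₂.neighborSet u).ncard ≤ 2) :
    F₁.leaves ∪ F₂.leaves = {u | P u} := by
  ext u
  have := hsplit u
  have := hmax₁ u
  have := hmax₂ u
  change (_ = 1 ∨ _ = 1) ↔ P u
  split_ifs at * with h <;> simp only [h, iff_true, iff_false] <;> omega

lemma disjoint_leaves_of_degree_split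
    (hsplit : ∀ u, (F₁.neighborSet u).ncard + (F₂.neighborSet u).ncard +
      (if P u then 1 else 0) = 4) :
    Disjoint F₁.leaves F₂.leaves := Set.disjoint_left.mpr fun u h₁ h₂ => by
  have := hsplit u
  rw [show _ = 1 from h₁, show _ = 1 from h₂] at this
  split_ifs at this <;> omega

lemma IsAcyclic.ncard_leaves_eq_two_of_degree_split [Fintype V] (hac₁ : F₁.IsAcyclic)
    (hac₂ : F₂.IsAcyclic)
    (hsplit : ∀ u, (F₁.neighborSet u).ncard + (F₂.neighborSet u).ncard +
      (if P u then 1 else 0) = 4)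
    (hmax₁ : ∀ u, (F₁.neighborSet u).ncard ≤ 2) (hmax₂ : ∀ u, (F₂.neighborSet u).ncard ≤ 2)
    (hP : {u | P u}.ncard = 4) : F₁.leaves.ncard = 2 := by
  obtain ⟨u, -⟩ := Set.nonempty_of_ncard_ne_zero (s := {u | P u}) (by omega)
  have : Nonempty V := ⟨u⟩
  have h₁ := hac₁.two_le_ncard_leaves (one_le_ncard_neighborSet_of_degree_split hsplit hmax₂)
  have h₂ := hac₂.two_le_ncard_leaves (one_le_ncard_neighborSet_of_degree_split
    (fun u => by rw [add_comm (F₂.neighborSet u).ncard, hsplit]) hmax₁)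
  have hsum := Set.ncard_union_eq (disjoint_leaves_of_degree_split hsplit)
  rw [leaves_union_leaves_of_degree_split hsplit hmax₁ hmax₂, hP] at hsum
  omega

end DegreeSplit

section HamiltonianCycles

variable {G : SimpleGraph V}

lemma Walk.IsCycle.isHamiltonianCycle_of_forall_mem_support [DecidableEq V] {u : V}
    {p : G.Walk u u} (hp : p.IsCycle) (hsupp : ∀ w, w ∈ p.support) : p.IsHamiltonianCycle := by
  refine Walk.isHamiltonianCycle_iff_isCycle_and_support_count_tail_eq_one.mpr ⟨hp, fun w => ?_⟩
  refine List.count_eq_one_of_mem hp.support_nodup ?_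
  rcases (p.mem_support_iff).mp (hsupp w) with rfl | h
  · exact Walk.end_mem_tail_support hp.not_nil
  · exact h

lemma Connected.exists_isHamiltonianCycle_of_isCycles [Finite V] [DecidableEq V]
    (hconn : G.Connected) (hcyc : G.IsCycles) {v : V} (hv : (G.neighborSet v).Nonempty) :
    ∃ p : G.Walk v v, p.IsHamiltonianCycle ∧ p.edgeSet = G.edgeSet := by
  classical
  have := Fintype.ofFinite V
  obtain ⟨p, hp, hverts⟩ :=
    hcyc.exists_cycle_toSubgraph_verts_eq_connectedComponentSupp (c := G.connectedComponentMk v)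
      rfl hv
  have hverts_all : ∀ w, w ∈ p.toSubgraph.verts := fun w => by
    rw [hverts, ConnectedComponent.mem_supp_iff, ConnectedComponent.eq]
    exact hconn.preconnected w v
  refine ⟨p, hp.isHamiltonianCycle_of_forall_mem_support
    fun w => p.mem_verts_toSubgraph.mp (hverts_all w), ?_⟩
  ext e
  induction e with
  | h a b =>
    rw [Walk.mem_edgeSet, ← Walk.adj_toSubgraph_iff_mem_edges, mem_edgeSet]
    exact hp.adj_toSubgraph_iff_of_isCycles hcyc (hverts_all a) b

lemma exists_hamiltonianDecomposition_of_isCycles [Finite V] [Nontrivial V] [DecidableEq V]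
    {C₁ C₂ : SimpleGraph V} (hconn₁ : C₁.Connected) (hcyc₁ : C₁.IsCycles)
    (hconn₂ : C₂.Connected) (hcyc₂ : C₂.IsCycles) (hsup : C₁ ⊔ C₂ = G)
    (hdisj : Disjoint C₁ C₂) :
    ∃ (x y : V) (H₁ : G.Walk x x) (H₂ : G.Walk y y),
      H₁.IsHamiltonianCycle ∧ H₂.IsHamiltonianCycle ∧
      (∀ e, ¬(e ∈ H₁.edges ∧ e ∈ H₂.edges)) ∧
      (∀ e ∈ G.edgeSet, e ∈ H₁.edges ∨ e ∈ H₂.edges) := by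
  subst hsup
  obtain ⟨x, -⟩ := exists_pair_ne V
  obtain ⟨p₁, hp₁, hedges₁⟩ := hconn₁.exists_isHamiltonianCycle_of_isCycles hcyc₁
    (hconn₁.preconnected.exists_adj_of_nontrivial x)
  obtain ⟨p₂, hp₂, hedges₂⟩ := hconn₂.exists_isHamiltonianCycle_of_isCycles hcyc₂
    (hconn₂.preconnected.exists_adj_of_nontrivial x)
  refine ⟨x, x, p₁.mapLe le_sup_left, p₂.mapLe le_sup_right, hp₁.map Function.bijective_id,
    hp₂.map Function.bijective_id, ?_, ?_⟩
  · rintro e ⟨he₁, he₂⟩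
    rw [Walk.edges_mapLe_eq_edges, ← Walk.mem_edgeSet, hedges₁] at he₁
    rw [Walk.edges_mapLe_eq_edges, ← Walk.mem_edgeSet, hedges₂] at he₂
    exact Set.disjoint_left.mp (disjoint_edgeSet.mpr hdisj) he₁ he₂
  · intro e he
    simp only [Walk.edges_mapLe_eq_edges, ← Walk.mem_edgeSet, hedges₁, hedges₂]
    rwa [edgeSet_sup] at he

end HamiltonianCycles

section AttachVertex

variable {v : V}

def attachVertex (v : V) (F : SimpleGraph {u : V | u ≠ v}) (L : Set {u : V | u ≠ v}) :
    SimpleGraph V :=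
  F.map Subtype.val ⊔ fromRel fun a b => a = v ∧ b ∈ Subtype.val '' L

variable {F F₁ F₂ : SimpleGraph {u : V | u ≠ v}} {L L₁ L₂ : Set {u : V | u ≠ v}}

@[simp]
lemma attachVertex_adj_val {u w : {u : V | u ≠ v}} :
    (attachVertex v F L).Adj u w ↔ F.Adj u w := by
  refine ⟨?_, fun h => Or.inl (map_adj_apply' h (Subtype.val_injective.ne h.ne))⟩
  rintro (⟨-, a, b, hab, ha, hb⟩ | ⟨-, ⟨hu, -⟩ | ⟨hw, -⟩⟩)
  · rwa [← Subtype.val_injective ha, ← Subtype.val_injective hb]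
  · exact absurd hu u.2
  · exact absurd hw w.2

@[simp]
lemma attachVertex_adj_self_val {u : {u : V | u ≠ v}} :
    (attachVertex v F L).Adj v u ↔ u ∈ L := by
  have hu : (u : V) ≠ v := u.2
  simp [attachVertex, map_adj', hu, hu.symm]

lemma neighborSet_attachVertex_self : (attachVertex v F L).neighborSet v = Subtype.val '' L := by
  ext a
  by_cases ha : a = v
  · subst ha; simp
  · lift a to {u : V | u ≠ v} using ha
    simp only [mem_neighborSet, attachVertex_adj_self_val, Set.mem_image, Subtype.val_inj,
      exists_eq_right]

lemma neighborSet_attachVertex_of_mem {u : {u : V | u ≠ v}} (hu : u ∈ L) :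
    (attachVertex v F L).neighborSet u = insert v (Subtype.val '' F.neighborSet u) := by
  ext a
  by_cases ha : a = v
  · subst ha
    simpa [adj_comm] using hu
  · obtain ⟨a, rfl⟩ : ∃ a' : {u : V | u ≠ v}, ↑a' = a := ⟨⟨a, ha⟩, rfl⟩
    simp [ha]

lemma neighborSet_attachVertex_of_notMem {u : {u : V | u ≠ v}} (hu : u ∉ L) :
    (attachVertex v F L).neighborSet u = Subtype.val '' F.neighborSet u := by
  ext a
  by_cases ha : a = v
  · subst ha
    simpa [adj_comm] using hu
  · obtain ⟨a, rfl⟩ : ∃ a' : {u : V | u ≠ v}, ↑a' = a := ⟨⟨a, ha⟩, rfl⟩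
    simp [ha]

lemma attachVertex_sup_attachVertex :
    attachVertex v F₁ L₁ ⊔ attachVertex v F₂ L₂ = attachVertex v (F₁ ⊔ F₂) (L₁ ∪ L₂) := by
  ext a b
  simp only [attachVertex, sup_adj, map_adj', fromRel_adj, Set.image_union, Set.mem_union]
  grind

lemma attachVertex_induce (G : SimpleGraph V) :
    attachVertex v (G.induce {u | u ≠ v}) {u | G.Adj u v} = G := by
  ext a b
  by_cases ha : a = v <;> by_cases hb : b = v
  · subst a b; simp
  · subst a
    lift b to {u : V | u ≠ v} using hb
    simp [adj_comm]
  · subst b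
    lift a to {u : V | u ≠ v} using ha
    simp [adj_comm]
  · lift a to {u : V | u ≠ v} using ha
    lift b to {u : V | u ≠ v} using hb
    simp

lemma disjoint_attachVertex (hF : Disjoint F₁ F₂) (hL : Disjoint L₁ L₂) :
    Disjoint (attachVertex v F₁ L₁) (attachVertex v F₂ L₂) := by
  simp only [← disjoint_edgeSet, Set.disjoint_left, Sym2.forall, mem_edgeSet]
  intro a b h₁ h₂
  by_cases ha : a = v <;> by_cases hb : b = v
  · subst a b
    exact h₁.ne rfl
  · subst a
    lift b to {u : V | u ≠ v} using hb
    simp only [attachVertex_adj_self_val] at h₁ h₂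
    exact Set.disjoint_left.mp hL h₁ h₂
  · subst b
    lift a to {u : V | u ≠ v} using ha
    rw [adj_comm] at h₁ h₂
    simp only [attachVertex_adj_self_val] at h₁ h₂
    exact Set.disjoint_left.mp hL h₁ h₂
  · lift a to {u : V | u ≠ v} using ha
    lift b to {u : V | u ≠ v} using hb
    simp only [attachVertex_adj_val] at h₁ h₂
    exact hF.le_bot ⟨h₁, h₂⟩

lemma connected_attachVertex (hreach : ∀ u, ∃ w ∈ L, F.Reachable u w) :
    (attachVertex v F L).Connected := by
  let f : F →g attachVertex v F L := ⟨Subtype.val, attachVertex_adj_val.mpr⟩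
  have hreach_v : ∀ a, (attachVertex v F L).Reachable a v := by
    intro a
    by_cases ha : a = v
    · subst a
      rfl
    · lift a to {u : V | u ≠ v} using ha
      obtain ⟨w, hw, haw⟩ := hreach a
      exact (haw.map f).trans (attachVertex_adj_self_val.mpr hw).symm.reachable
  exact (connected_iff _).mpr ⟨fun a b => (hreach_v a).trans (hreach_v b).symm, ⟨v⟩⟩

lemma isCycles_attachVertex_leaves [Finite V] (hmin : ∀ u, 1 ≤ (F.neighborSet u).ncard)
    (hmax : ∀ u, (F.neighborSet u).ncard ≤ 2) (hleaves : F.leaves.ncard = 2) :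
    (attachVertex v F F.leaves).IsCycles := by
  intro a _
  by_cases ha : a = v
  · subst a
    rw [neighborSet_attachVertex_self, Set.ncard_image_of_injective _ Subtype.val_injective,
      hleaves]
  · lift a to {u : V | u ≠ v} using ha
    by_cases hleaf : a ∈ F.leaves
    · have hv : v ∉ Subtype.val '' F.neighborSet a := fun ⟨w, _, hw⟩ => w.2 hw
      rw [neighborSet_attachVertex_of_mem hleaf, Set.ncard_insert_of_notMem hv,
        Set.ncard_image_of_injective _ Subtype.val_injective, show _ = 1 from hleaf]
    · rw [neighborSet_attachVertex_of_notMem hleaf,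
        Set.ncard_image_of_injective _ Subtype.val_injective]
      have := hmin a
      have := hmax a
      have : (F.neighborSet a).ncard ≠ 1 := hleaf
      omega

end AttachVertex

end SimpleGraph

/-- If `G` is a 4-regular graph and `v` is a vertex such that the edge set of the
vertex-deleted subgraph `G - v` can be partitioned into two linear forests, then `G`
has a Hamiltonian decomposition: its edge set can be partitioned into two Hamiltonian
cycles. -/
theorem linearArboricity_hamiltonianDecomposition {V : Type} [Fintype V] [DecidableEq V]
    (G : SimpleGraph V) [DecidableRel G.Adj] (hreg : G.IsRegularOfDegree 4) (v : V)
    (hforests : ∃ F₁ F₂ : SimpleGraph {u : V | u ≠ v},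
      F₁ ≤ G.induce {u : V | u ≠ v} ∧ F₂ ≤ G.induce {u : V | u ≠ v} ∧
      IsLinearForest F₁ ∧ IsLinearForest F₂ ∧
      Disjoint F₁.edgeSet F₂.edgeSet ∧
      F₁.edgeSet ∪ F₂.edgeSet = (G.induce {u : V | u ≠ v}).edgeSet) :
    ∃ (x y : V) (H₁ : G.Walk x x) (H₂ : G.Walk y y),
      H₁.IsHamiltonianCycle ∧ H₂.IsHamiltonianCycle ∧
      (∀ e, ¬(e ∈ H₁.edges ∧ e ∈ H₂.edges)) ∧
      (∀ e ∈ G.edgeSet, e ∈ H₁.edges ∨ e ∈ H₂.edges) := by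
  obtain ⟨F₁, F₂, -, -, ⟨hac₁, hmax₁⟩, ⟨hac₂, hmax₂⟩, hdisj, hunion⟩ := hforests
  have hsup : F₁ ⊔ F₂ = G.induce {u | u ≠ v} := edgeSet_injective (by rw [edgeSet_sup, hunion])
  rw [disjoint_edgeSet] at hdisj
  have hsplit₁ (u : {u : V | u ≠ v}) : (F₁.neighborSet u).ncard + (F₂.neighborSet u).ncard +
      (if G.Adj u v then 1 else 0) = 4 := by
    rw [← ncard_neighborSet_sup hdisj, hsup, ncard_neighborSet_induce_add,
      ncard_neighborSet_eq_degree, hreg]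
  have hsplit₂ (u : {u : V | u ≠ v}) : (F₂.neighborSet u).ncard + (F₁.neighborSet u).ncard +
      (if G.Adj u v then 1 else 0) = 4 := by
    rw [add_comm (F₂.neighborSet u).ncard, hsplit₁]
  have hN : {u : {u : V | u ≠ v} | G.Adj u v}.ncard = 4 := by
    rw [ncard_setOf_adj_val, ncard_neighborSet_eq_degree, hreg]
  have hmin₁ := one_le_ncard_neighborSet_of_degree_split hsplit₁ hmax₂
  have hmin₂ := one_le_ncard_neighborSet_of_degree_split hsplit₂ hmax₁
  obtain ⟨u, hu⟩ := (G.degree_pos_iff_exists_adj v).mp (by rw [hreg v]; norm_num : 0 < G.degree v)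
  have : Nontrivial V := nontrivial_of_ne v u hu.ne
  refine exists_hamiltonianDecomposition_of_isCycles
    (connected_attachVertex (hac₁.exists_reachable_mem_leaves hmin₁))
    (isCycles_attachVertex_leaves hmin₁ hmax₁
      (hac₁.ncard_leaves_eq_two_of_degree_split hac₂ hsplit₁ hmax₁ hmax₂ hN))
    (connected_attachVertex (hac₂.exists_reachable_mem_leaves hmin₂))
    (isCycles_attachVertex_leaves hmin₂ hmax₂
      (hac₂.ncard_leaves_eq_two_of_degree_split hac₁ hsplit₂ hmax₂ hmax₁ hN))
    ?_ (disjoint_attachVertex hdisj (disjoint_leaves_of_degree_split hsplit₁))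
  rw [attachVertex_sup_attachVertex, hsup, leaves_union_leaves_of_degree_split hsplit₁ hmax₁ hmax₂]
  exact attachVertex_induce G
end
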